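/- For every subgraph H of G1 with maximum degree at most 3, the graph G1 − E(H) contains a subgraph isomorphic to K4 or a subgraph isomorphic to a member of 𝒥. -/

import Mathlib

/-- The simple graph on `V` whose edges are the (symmetrized) pairs in the list `l`. -/
def graphOfList {V : Type*} (l : List (V × V)) : SimpleGraph V :=
  SimpleGraph.fromRel (fun x y => (x, y) ∈ l)

/-- The complete graph on four vertices. -/
def K4 : SimpleGraph (Fin 4) := ⊤

/-- `G` contains a subgraph isomorphic to the pattern graph `P`. -/
def ContainsSub {W V : Type*} (P : SimpleGraph W) (G : SimpleGraph V) : Prop :=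
  ∃ f : W ↪ V, ∀ ⦃a b : W⦄, P.Adj a b → G.Adj (f a) (f b)

/-- The member of the family 𝒥 determined by `s : Fin 6 → Bool`: vertices are
`a = Sum.inl 0`, `b = Sum.inl 1`, and `c i = Sum.inr (i,0)`, `d i = Sum.inr (i,1)`,
`e i = Sum.inr (i,2)`; the `i`-th copy is `J1` if `s i = true` and `J2` otherwise. -/
def Jfam (s : Fin 6 → Bool) : SimpleGraph (Sum (Fin 2) (Fin 6 × Fin 3)) :=
  SimpleGraph.fromRel (fun x y =>
    (x = Sum.inl 0 ∧ y = Sum.inl 1) ∨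
    ∃ i : Fin 6,
      (x = Sum.inl 0 ∧ y = Sum.inr (i, 0)) ∨
      (x = Sum.inl 1 ∧ y = Sum.inr (i, 0)) ∨
      (x = Sum.inl 0 ∧ y = Sum.inr (i, 2)) ∨
      (x = Sum.inl 1 ∧ y = Sum.inr (i, 2)) ∨
      (x = Sum.inr (i, 0) ∧ y = Sum.inr (i, 1)) ∨
      (x = Sum.inr (i, 1) ∧ y = Sum.inr (i, 2)) ∨
      (s i = true ∧ x = Sum.inl 0 ∧ y = Sum.inr (i, 1)) ∨
      (s i = false ∧ x = Sum.inl 1 ∧ y = Sum.inr (i, 1)))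

/-- The graph `J3`, with vertices `a,…,k` encoded as `0,…,10`. -/
def J3 : SimpleGraph (Fin 11) :=
  graphOfList [(0,1),
    (0,2), (0,3), (0,4), (0,5), (0,6),
    (1,2), (1,3), (1,4), (1,5), (1,6),
    (2,3), (3,4), (4,5), (5,6),
    (7,0), (7,3), (7,4),
    (8,0), (8,4), (8,5),
    (9,1), (9,3), (9,4),
    (10,1), (10,4), (10,5)]

/-- The map placing the `t`-th copy of `J3` into `S`: the handle vertices `a = 0` and
`b = 1` of `J3` go to the common handle vertices `Sum.inl 0` and `Sum.inl 1`, and the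
remaining nine vertices of the copy go to `Sum.inr (t, ·)`. -/
def mp (t : Fin 9) (m : Fin 11) : Sum (Fin 2) (Fin 9 × Fin 9) :=
  if m.val = 0 then Sum.inl 0
  else if m.val = 1 then Sum.inl 1
  else Sum.inr (t, ⟨m.val - 2, by have := m.isLt; omega⟩)

/-- The graph `S`, obtained from nine copies of `J3` by identifying the nine edges
corresponding to `ab` into the single edge joining `Sum.inl 0` and `Sum.inl 1`. -/
def S : SimpleGraph (Sum (Fin 2) (Fin 9 × Fin 9)) :=
  SimpleGraph.fromRel (fun x y =>
    ∃ t : Fin 9, ∃ p q : Fin 11, J3.Adj p q ∧ x = mp t p ∧ y = mp t q)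


/-- The map placing the `i`-th copy of `S` into `G1`: the handle vertex `a = Sum.inl 0`
of `S` goes to the star center `u`, the handle vertex `b = Sum.inl 1` goes to the leaf
`v i`, and the remaining vertices of the copy go to `Sum.inr (i, ·)`. -/
def mg (i : Fin 4) :
    Sum (Fin 2) (Fin 9 × Fin 9) → Sum (Sum Unit (Fin 4)) (Fin 4 × (Fin 9 × Fin 9))
  | Sum.inl j => if j = 0 then Sum.inl (Sum.inl ()) else Sum.inl (Sum.inr i)
  | Sum.inr p => Sum.inr (i, p)

/-- The graph `G1`, obtained from a star with center `u = Sum.inl (Sum.inl ())` and four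
leaves `v i = Sum.inl (Sum.inr i)` by attaching, for each `i`, a copy of `S` whose handle
is identified with the edge `u (v i)`. -/
def G1 : SimpleGraph (Sum (Sum Unit (Fin 4)) (Fin 4 × (Fin 9 × Fin 9))) :=
  SimpleGraph.fromRel (fun x y =>
    ∃ i : Fin 4, ∃ p q : Sum (Fin 2) (Fin 9 × Fin 9), S.Adj p q ∧ x = mg i p ∧ y = mg i q)

/-! Since the hub `u` has at most three `H`-neighbours, `H` has no edge from `u` into some
copy `S_i`; since `v_i` has at most three `H`-neighbours, at least six of the nine copies of `J3`
in `S_i` receive no edge of `H` from `u` or `v_i`. In such a copy, a path edge among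
`cd, de, ef, fg` that survives in `G1 − E(H)` spans a `K4` with the handle. Otherwise all four
lie in `H`, and the degree bound at `d, e, f` leaves one of `h, i, j, k` joined to the path by two
surviving edges; with the handle this is a copy of `J1` (for `h, i`) or `J2` (for `j, k`). Six
such copies on the common handle `u v_i` form a member of `𝒥`. -/

open Function SimpleGraph

section General

variable {U V W : Type*}

theorem ContainsSub.map {P : SimpleGraph U} {G : SimpleGraph V} {G' : SimpleGraph W}
    (h : ContainsSub P G) (f : G →g G') (hf : Injective f) : ContainsSub P G' := by
  obtain ⟨e, he⟩ := h
  exact ⟨e.trans ⟨f, hf⟩, fun _ _ hab => f.map_adj (he hab)⟩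

theorem containsSub_K4_of_adj {G : SimpleGraph V} {a b c d : V}
    (hab : G.Adj a b) (hac : G.Adj a c) (had : G.Adj a d)
    (hbc : G.Adj b c) (hbd : G.Adj b d) (hcd : G.Adj c d) : ContainsSub K4 G := by
  refine ⟨⟨![a, b, c, d], fun x y hxy => ?_⟩, fun x y hxy => ?_⟩
  · by_contra hne
    fin_cases x <;> fin_cases y <;> simp_all [G.ne_of_adj]
  · change G.Adj (![a, b, c, d] x) (![a, b, c, d] y)
    fin_cases x <;> fin_cases y <;> simp_all [K4, G.adj_comm]

/-- With the handle `a b`, the vertices `c d e` span a copy of `J1` (if `s`) or of `J2`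
(if `¬ s`), except for the handle edge itself. -/
def IsJCopy (G : SimpleGraph V) (a b c d e : V) (s : Bool) : Prop :=
  G.Adj a c ∧ G.Adj b c ∧ G.Adj a e ∧ G.Adj b e ∧ G.Adj c d ∧ G.Adj d e ∧
    G.Adj (bif s then a else b) d

instance {G : SimpleGraph V} [DecidableRel G.Adj] {a b c d e : V} {s : Bool} :
    Decidable (IsJCopy G a b c d e s) := by
  unfold IsJCopy; infer_instance

theorem IsJCopy.map {G : SimpleGraph V} {G' : SimpleGraph W} (f : G →g G') {a b c d e : V}
    {s : Bool} (h : IsJCopy G a b c d e s) : IsJCopy G' (f a) (f b) (f c) (f d) (f e) s := by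
  obtain ⟨hac, hbc, hae, hbe, hcd, hde, hd⟩ := h
  refine ⟨f.map_adj hac, f.map_adj hbc, f.map_adj hae, f.map_adj hbe, f.map_adj hcd,
    f.map_adj hde, ?_⟩
  cases s <;> exact f.map_adj hd

theorem IsJCopy.sdiff {G H : SimpleGraph V} {a b c d e : V} {s : Bool} (h : IsJCopy G a b c d e s)
    (ha : ∀ x, ¬ H.Adj a x) (hb : ∀ x, ¬ H.Adj b x) (hcd : ¬ H.Adj c d) (hed : ¬ H.Adj e d) :
    IsJCopy (G \ H) a b c d e s := by
  obtain ⟨hac, hbc, hae, hbe, hcd', hde, hd⟩ := h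
  refine ⟨⟨hac, ha c⟩, ⟨hbc, hb c⟩, ⟨hae, ha e⟩, ⟨hbe, hb e⟩, ⟨hcd', hcd⟩,
    ⟨hde, fun h => hed h.symm⟩, ?_⟩
  cases s
  exacts [⟨hd, hb d⟩, ⟨hd, ha d⟩]

theorem containsSub_Jfam {G : SimpleGraph V} (s : Fin 6 → Bool)
    (ψ : Sum (Fin 2) (Fin 6 × Fin 3) ↪ V) (hab : G.Adj (ψ (.inl 0)) (ψ (.inl 1)))
    (hJ : ∀ j, IsJCopy G (ψ (.inl 0)) (ψ (.inl 1)) (ψ (.inr (j, 0))) (ψ (.inr (j, 1)))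
      (ψ (.inr (j, 2))) (s j)) :
    ContainsSub (Jfam s) G := by
  refine ⟨ψ, ?_⟩
  suffices h : ∀ x y, ((x = .inl 0 ∧ y = .inl 1) ∨ ∃ j : Fin 6,
      (x = .inl 0 ∧ y = .inr (j, 0)) ∨ (x = .inl 1 ∧ y = .inr (j, 0)) ∨
      (x = .inl 0 ∧ y = .inr (j, 2)) ∨ (x = .inl 1 ∧ y = .inr (j, 2)) ∨
      (x = .inr (j, 0) ∧ y = .inr (j, 1)) ∨ (x = .inr (j, 1) ∧ y = .inr (j, 2)) ∨
      (s j = true ∧ x = .inl 0 ∧ y = .inr (j, 1)) ∨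
      (s j = false ∧ x = .inl 1 ∧ y = .inr (j, 1))) → G.Adj (ψ x) (ψ y) by
    intro x y hxy
    obtain ⟨-, hr | hr⟩ := SimpleGraph.fromRel_adj _ _ _ |>.mp hxy
    exacts [h x y hr, (h y x hr).symm]
  rintro x y (⟨rfl, rfl⟩ | ⟨j, hj⟩)
  · exact hab
  obtain ⟨hac, hbc, hae, hbe, hcd, hde, hd⟩ := hJ j
  rcases hj with ⟨rfl, rfl⟩ | ⟨rfl, rfl⟩ | ⟨rfl, rfl⟩ | ⟨rfl, rfl⟩ | ⟨rfl, rfl⟩ | ⟨rfl, rfl⟩ |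
    ⟨hs, rfl, rfl⟩ | ⟨hs, rfl, rfl⟩
  exacts [hac, hbc, hae, hbe, hcd, hde, by simpa [hs] using hd, by simpa [hs] using hd]

theorem four_le_ncard_neighborSet [Finite V] {H : SimpleGraph V} {v a b c d : V}
    (hnd : [a, b, c, d].Nodup) (ha : H.Adj v a) (hb : H.Adj v b) (hc : H.Adj v c)
    (hd : H.Adj v d) : 4 ≤ (H.neighborSet v).ncard := by
  classical
  have hsub : (↑[a, b, c, d].toFinset : Set V) ⊆ H.neighborSet v := by
    intro x hx
    simp only [List.coe_toFinset, List.mem_cons, List.not_mem_nil, or_false,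
      Set.mem_ofPred_eq] at hx
    rcases hx with rfl | rfl | rfl | rfl <;> assumption
  calc 4 = [a, b, c, d].toFinset.card := (List.toFinset_card_of_nodup hnd).symm
    _ = (↑[a, b, c, d].toFinset : Set V).ncard := (Set.ncard_coe_finset _).symm
    _ ≤ _ := Set.ncard_le_ncard hsub

theorem adj_or_adj_of_ncard_neighborSet_le_three [Finite V] {H : SimpleGraph V}
    {w w' p q y₁ y₂ : V} (hdeg : (H.neighborSet w).ncard ≤ 3) (hnd : [p, q, y₁, y₂].Nodup)
    (hp : H.Adj w p) (hq : H.Adj w q) (h₁ : H.Adj w y₁ ∨ H.Adj w' y₁)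
    (h₂ : H.Adj w y₂ ∨ H.Adj w' y₂) : H.Adj w' y₁ ∨ H.Adj w' y₂ := by
  rcases h₁ with h₁ | h₁ <;> rcases h₂ with h₂ | h₂
  · have := four_le_ncard_neighborSet hnd hp hq h₁ h₂; omega
  all_goals tauto

theorem ncard_neighborSet_comap_le [Finite W] (H : SimpleGraph W) {f : V → W} (hf : Injective f)
    (v : V) : ((H.comap f).neighborSet v).ncard ≤ (H.neighborSet (f v)).ncard :=
  Set.ncard_le_ncard_of_injOn f (fun _ h => h) hf.injOn

def SimpleGraph.Hom.sdiffComap {G : SimpleGraph V} {G' : SimpleGraph W} (f : G →g G')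
    (H : SimpleGraph W) : G \ H.comap f →g G' \ H where
  toFun := f
  map_rel' h := ⟨f.map_adj h.1, h.2⟩

theorem exists_embedding_fin_forall_ne {α ι : Type*} [Fintype ι] {s : Set α} (hs : s.Finite)
    (g : α → ι) {k : ℕ} (hk : s.ncard + k ≤ Fintype.card ι) :
    ∃ τ : Fin k ↪ ι, ∀ x ∈ s, ∀ j, g x ≠ τ j := by
  classical
  set T : Finset ι := (hs.image g).toFinsetᶜ
  have hT : k ≤ T.card := by
    rw [Finset.card_compl, ← Set.ncard_eq_toFinset_card _ (hs.image g)]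
    have := Set.ncard_image_le (f := g) hs
    omega
  obtain ⟨e⟩ := Embedding.nonempty_of_card_le (α := Fin k) (β := T)
    (by simpa only [Fintype.card_fin, Fintype.card_coe] using hT)
  refine ⟨e.trans (Embedding.subtype _), fun x hx j hj => Finset.mem_compl.mp (e j).2 ?_⟩
  exact (hs.image g).mem_toFinset.mpr ⟨x, hx, hj⟩

end General

instance {V : Type*} [DecidableEq V] (l : List (V × V)) : DecidableRel (graphOfList l).Adj :=
  fun a b => decidable_of_iff (a ≠ b ∧ ((a, b) ∈ l ∨ (b, a) ∈ l)) Iff.rfl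

instance : DecidableRel J3.Adj := by
  unfold J3; infer_instance

theorem J3_sdiff_containsSub_K4_or_isJCopy (H : SimpleGraph (Fin 11))
    (hdeg : ∀ v, (H.neighborSet v).ncard ≤ 3) (ha : ∀ x, ¬ H.Adj 0 x) (hb : ∀ x, ¬ H.Adj 1 x) :
    ContainsSub K4 (J3 \ H) ∨ ∃ (g : Fin 3 ↪ Fin 11) (s : Bool),
      (∀ r, 2 ≤ g r) ∧ IsJCopy (J3 \ H) 0 1 (g 0) (g 1) (g 2) s := by
  by_cases hK : ContainsSub K4 (J3 \ H)
  · exact .inl hK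
  right
  have hJ : ∀ p ∈ [2, 3, 4, 5], J3.Adj 0 1 ∧ J3.Adj 0 p ∧ J3.Adj 0 (p + 1) ∧
      J3.Adj 1 p ∧ J3.Adj 1 (p + 1) ∧ J3.Adj p (p + 1) := by
    decide
  have hpath : ∀ p ∈ [2, 3, 4, 5], H.Adj p (p + 1) := by
    intro p hp
    by_contra hp'
    obtain ⟨h01, h0p, h0p', h1p, h1p', hpp'⟩ := hJ p hp
    exact hK (containsSub_K4_of_adj ⟨h01, ha 1⟩ ⟨h0p, ha p⟩ ⟨h0p', ha _⟩ ⟨h1p, hb p⟩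
      ⟨h1p', hb _⟩ ⟨hpp', hp'⟩)
  have h23 : H.Adj 2 3 := hpath 2 (by simp)
  have h34 : H.Adj 3 4 := hpath 3 (by simp)
  have h45 : H.Adj 4 5 := hpath 4 (by simp)
  have h56 : H.Adj 5 6 := hpath 5 (by simp)
  by_contra! hno
  have hfail : ∀ (g : Fin 3 ↪ Fin 11) (s : Bool), (∀ r, 2 ≤ g r) →
      IsJCopy J3 0 1 (g 0) (g 1) (g 2) s → H.Adj (g 0) (g 1) ∨ H.Adj (g 2) (g 1) := by
    intro g s hg hJ
    by_contra! h
    exact hno g s hg (hJ.sdiff ha hb h.1 h.2)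
  have h7 : H.Adj 3 7 ∨ H.Adj 4 7 := hfail ⟨![3, 7, 4], by decide⟩ true (by decide) (by decide)
  have h8 : H.Adj 5 8 ∨ H.Adj 4 8 := hfail ⟨![5, 8, 4], by decide⟩ true (by decide) (by decide)
  have h9 : H.Adj 3 9 ∨ H.Adj 4 9 := hfail ⟨![3, 9, 4], by decide⟩ false (by decide) (by decide)
  have h10 : H.Adj 5 10 ∨ H.Adj 4 10 :=
    hfail ⟨![5, 10, 4], by decide⟩ false (by decide) (by decide)
  -- `d` and `f` already have two `H`-neighbours on the path, so each pushes a failure onto `e`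
  have h79 : H.Adj 4 7 ∨ H.Adj 4 9 :=
    adj_or_adj_of_ncard_neighborSet_le_three (hdeg 3) (by decide) h23.symm h34 h7 h9
  have h810 : H.Adj 4 8 ∨ H.Adj 4 10 :=
    adj_or_adj_of_ncard_neighborSet_le_three (hdeg 5) (by decide) h45.symm h56 h8 h10
  have := hdeg 4
  rcases h79 with h | h <;> rcases h810 with h' | h' <;>
    have := four_le_ncard_neighborSet (by decide) h34.symm h45 h h' <;> omega

theorem sdiff_containsSub_K4_or_isJCopy_of_J3 {V : Type*} [Finite V] {G H : SimpleGraph V}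
    (hdeg : ∀ v, (H.neighborSet v).ncard ≤ 3) (f : J3 →g G) (hf : Injective f)
    (ha : ∀ m, ¬ H.Adj (f 0) (f m)) (hb : ∀ m, ¬ H.Adj (f 1) (f m)) :
    ContainsSub K4 (G \ H) ∨ ∃ (g : Fin 3 ↪ Fin 11) (s : Bool),
      (∀ r, 2 ≤ g r) ∧ IsJCopy (G \ H) (f 0) (f 1) (f (g 0)) (f (g 1)) (f (g 2)) s := by
  rcases J3_sdiff_containsSub_K4_or_isJCopy (H.comap f)
    (fun v => (ncard_neighborSet_comap_le H hf v).trans (hdeg _)) ha hb with hK | ⟨g, s, hg, hJ⟩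
  · exact .inl (hK.map (f.sdiffComap H) hf)
  · exact .inr ⟨g, s, hg, hJ.map (f.sdiffComap H)⟩

namespace G1

def hub : Sum (Sum Unit (Fin 4)) (Fin 4 × (Fin 9 × Fin 9)) := .inl (.inl ())

def leaf (i : Fin 4) : Sum (Sum Unit (Fin 4)) (Fin 4 × (Fin 9 × Fin 9)) := .inl (.inr i)

/-- The `t`-th copy of `J3` inside the `i`-th copy of `S`. -/
def copy (i : Fin 4) (t : Fin 9) (m : Fin 11) : Sum (Sum Unit (Fin 4)) (Fin 4 × (Fin 9 × Fin 9)) :=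
  mg i (mp t m)

/-- The index of the copy of `S`, resp. of `J3`, containing a vertex; the values at `hub`,
resp. at `hub` and the leaves, are arbitrary. -/
def leafIdx : Sum (Sum Unit (Fin 4)) (Fin 4 × (Fin 9 × Fin 9)) → Fin 4 :=
  Sum.elim (Sum.elim (fun _ => 0) id) Prod.fst

def copyIdx : Sum (Sum Unit (Fin 4)) (Fin 4 × (Fin 9 × Fin 9)) → Fin 9 :=
  Sum.elim (fun _ => 0) fun p => p.2.1

theorem copy_of_two_le (i : Fin 4) (t : Fin 9) {m : Fin 11} (hm : 2 ≤ m) :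
    copy i t m = .inr (i, t, ⟨m - 2, by omega⟩) := by
  have h0 : m.val ≠ 0 := by omega
  have h1 : m.val ≠ 1 := by omega
  simp [copy, mp, mg, h0, h1]

theorem copy_injective : ∀ i t, Injective (copy i t) := by decide

theorem copy_eq_hub_or_eq_leaf_or : ∀ i t m, copy i t m = hub ∨ copy i t m = leaf i ∨
    (leafIdx (copy i t m) = i ∧ copyIdx (copy i t m) = t) := by decide

def copyHom (i : Fin 4) (t : Fin 9) : J3 →g G1 where
  toFun := copy i t
  map_rel' {p q} h := by
    have hS : S.Adj (mp t p) (mp t q) :=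
      (fromRel_adj _ _ _).mpr ⟨fun e => h.ne (copy_injective i t (congrArg (mg i) e)),
        .inl ⟨t, p, q, h, rfl, rfl⟩⟩
    exact (fromRel_adj _ _ _).mpr ⟨(copy_injective i t).ne h.ne, .inl ⟨i, _, _, hS, rfl, rfl⟩⟩

theorem injective_sumElim_copy (i : Fin 4) (τ : Fin 6 ↪ Fin 9) (g : Fin 6 → Fin 3 ↪ Fin 11)
    (hg : ∀ j r, 2 ≤ g j r) :
    Injective (Sum.elim ![hub, leaf i] fun p : Fin 6 × Fin 3 => copy i (τ p.1) (g p.1 p.2)) := by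
  refine Injective.sumElim ?_ ?_ ?_
  · intro a b h
    fin_cases a <;> fin_cases b <;> simp_all [hub, leaf]
  · rintro ⟨j, r⟩ ⟨j', r'⟩ h
    simp only [copy_of_two_le _ _ (hg _ _), Sum.inr.injEq, Prod.mk.injEq, Fin.mk.injEq] at h
    obtain ⟨-, hτ, hm⟩ := h
    obtain rfl := τ.injective hτ
    have := hg j r
    have := hg j r'
    rw [(g j).injective (Fin.ext (by omega) : g j r = g j r')]
  · intro a p
    rw [copy_of_two_le _ _ (hg _ _)]
    fin_cases a <;> simp [hub, leaf]

end G1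

open G1 in
theorem statement3_general (H : SimpleGraph (Sum (Sum Unit (Fin 4)) (Fin 4 × (Fin 9 × Fin 9))))
    (hdeg : ∀ v, (H.neighborSet v).ncard ≤ 3) :
    ContainsSub K4 (G1 \ H) ∨ ∃ s : Fin 6 → Bool, ContainsSub (Jfam s) (G1 \ H) := by
  obtain ⟨ι, hι⟩ := exists_embedding_fin_forall_ne (H.neighborSet hub).toFinite leafIdx (k := 1)
    (by rw [Fintype.card_fin]; linarith [hdeg hub])
  set i := ι 0
  have hhub : ∀ t m, ¬ H.Adj hub (copy i t m) := by
    intro t m hadj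
    rcases copy_eq_hub_or_eq_leaf_or i t m with h | h | ⟨h, -⟩
    · exact H.irrefl (h ▸ hadj)
    · exact hι _ (h ▸ hadj) 0 rfl
    · exact hι _ hadj 0 h
  obtain ⟨τ, hτ⟩ := exists_embedding_fin_forall_ne (H.neighborSet (leaf i)).toFinite copyIdx
    (k := 6) (by rw [Fintype.card_fin]; linarith [hdeg (leaf i)])
  have hleaf : ∀ j m, ¬ H.Adj (leaf i) (copy i (τ j) m) := by
    intro j m hadj
    rcases copy_eq_hub_or_eq_leaf_or i (τ j) m with h | h | ⟨-, h⟩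
    · exact hhub (τ j) 1 (h ▸ hadj).symm
    · exact H.irrefl (h ▸ hadj)
    · exact hτ _ hadj j h
  by_cases hK : ContainsSub K4 (G1 \ H)
  · exact .inl hK
  have hJ : ∀ j, ∃ (g : Fin 3 ↪ Fin 11) (s : Bool), (∀ r, 2 ≤ g r) ∧ IsJCopy (G1 \ H) hub
      (leaf i) (copy i (τ j) (g 0)) (copy i (τ j) (g 1)) (copy i (τ j) (g 2)) s := fun j =>
    (sdiff_containsSub_K4_or_isJCopy_of_J3 hdeg (copyHom i (τ j)) (copy_injective i (τ j))
      (hhub (τ j)) (hleaf j)).resolve_left hK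
  choose g s hg hJ using hJ
  exact .inr ⟨s, containsSub_Jfam s ⟨_, injective_sumElim_copy i τ g hg⟩
    ⟨(copyHom i (τ 0)).map_adj (by decide : J3.Adj 0 1), hhub (τ 0) 1⟩ hJ⟩

/-- For every subgraph `H` of `G1` with maximum degree at most 3, the graph `G1 − E(H)`
contains a subgraph isomorphic to `K4` or to a member of 𝒥. -/
theorem statement3 (H : SimpleGraph (Sum (Sum Unit (Fin 4)) (Fin 4 × (Fin 9 × Fin 9))))
    (hle : H ≤ G1) (hdeg : ∀ v, (H.neighborSet v).ncard ≤ 3) :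
    ContainsSub K4 (G1 \ H) ∨ ∃ s : Fin 6 → Bool, ContainsSub (Jfam s) (G1 \ H) :=
  statement3_general H hdeg
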